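/- If an (ℓ,c)-block map ψ satisfies the surjectivity condition, then its induced map h_ψ : E^∞ → F^∞ is surjective. -/

import Mathlib

structure DirGraph where
  V : Type
  E : Type
  src : E → V
  rng : E → V

namespace DirGraph

def PathSpace (G : DirGraph) : Type :=
  {x : ℕ → G.E // ∀ i, G.rng (x i) = G.src (x (i + 1))}

instance (G : DirGraph) : TopologicalSpace G.PathSpace :=
  TopologicalSpace.induced Subtype.val (@Pi.topologicalSpace ℕ (fun _ => G.E) (fun _ => ⊥))

def shift (G : DirGraph) (x : G.PathSpace) : G.PathSpace :=
  ⟨fun i => x.1 (i + 1), fun i => x.2 (i + 1)⟩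

def NoSinks (G : DirGraph) : Prop := ∀ v : G.V, ∃ e : G.E, G.src e = v

def NoSources (G : DirGraph) : Prop := ∀ v : G.V, ∃ e : G.E, G.rng e = v

def IsFinite (G : DirGraph) : Prop := Finite G.V ∧ Finite G.E

def FinPath (G : DirGraph) (n : ℕ) : Type :=
  {μ : Fin n → G.E // ∀ i j : Fin n, (j : ℕ) = (i : ℕ) + 1 → G.rng (μ i) = G.src (μ j)}

def seg (G : DirGraph) (x : G.PathSpace) (i n : ℕ) : G.FinPath n :=
  ⟨fun j => x.1 (i + (j : ℕ)), by
    rintro ⟨a, ha⟩ ⟨b, hb⟩ hab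
    simp only at hab
    subst hab
    exact x.2 (i + a)⟩

def cyl (G : DirGraph) {n : ℕ} (μ : G.FinPath n) : Set G.PathSpace :=
  {x | G.seg x 0 n = μ}

def lastEdge (G : DirGraph) {ℓ : ℕ} (μ : G.FinPath (1 + ℓ)) : G.E :=
  μ.1 ⟨ℓ, by omega⟩

def IsSlidingBlockCode (E F : DirGraph) (ℓ : ℕ) (h : E.PathSpace → F.PathSpace) : Prop :=
  Continuous h ∧ ∀ x, F.shift^[ℓ + 1] (h x) = F.shift^[ℓ] (h (E.shift x))

def HasContinuityConstant (E F : DirGraph) (ℓ c : ℕ) (h : E.PathSpace → F.PathSpace) : Prop :=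
  ∀ k, ℓ ≤ k → ∀ x : E.PathSpace,
    h '' E.cyl (E.seg x 0 (k + c + 1)) ⊆ F.cyl (F.seg (h x) 0 (k + 1))

def IsConjugacy (E F : DirGraph) (h : E.PathSpace → F.PathSpace) : Prop :=
  Continuous h ∧ Function.Bijective h ∧ ∀ x, F.shift (h x) = h (E.shift x)

def IsCompatible (E F : DirGraph) (ℓ c : ℕ)
    (ψ : E.FinPath (1 + ℓ + c) → F.FinPath (1 + ℓ)) : Prop :=
  ∀ x : E.PathSpace,
    F.rng (F.lastEdge (ψ (E.seg x 0 (1 + ℓ + c)))) =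
      F.src (F.lastEdge (ψ (E.seg x 1 (1 + ℓ + c))))

def MatchesOut (E F : DirGraph) (ℓ c : ℕ) (ψ : E.FinPath (1 + ℓ + c) → F.FinPath (1 + ℓ))
    (x : E.PathSpace) {k : ℕ} (hk : ℓ ≤ k) (β : F.FinPath (1 + k)) : Prop :=
  (∀ j : Fin (1 + ℓ), β.1 ⟨(j : ℕ), by have := j.isLt; omega⟩ = (ψ (E.seg x 0 (1 + ℓ + c))).1 j) ∧
  (∀ i, (hi : ℓ + i ≤ k) → β.1 ⟨ℓ + i, by omega⟩ = F.lastEdge (ψ (E.seg x i (1 + ℓ + c))))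

def InducedOnPaths (E F : DirGraph) (ℓ c : ℕ) (ψ : E.FinPath (1 + ℓ + c) → F.FinPath (1 + ℓ))
    (h : E.PathSpace → F.PathSpace) : Prop :=
  ∀ (x : E.PathSpace) (k : ℕ) (hk : ℓ ≤ k), MatchesOut E F ℓ c ψ x hk (F.seg (h x) 0 (1 + k))

def SurjCondition (E F : DirGraph) (ℓ c : ℕ)
    (ψ : E.FinPath (1 + ℓ + c) → F.FinPath (1 + ℓ)) : Prop :=
  ∀ k (hk : ℓ ≤ k) (β : F.FinPath (1 + k)), ∃ x : E.PathSpace, MatchesOut E F ℓ c ψ x hk β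

def InjCondition (E F : DirGraph) (ℓ c : ℕ)
    (ψ : E.FinPath (1 + ℓ + c) → F.FinPath (1 + ℓ)) : Prop :=
  ∀ k, ℓ ≤ k → ∃ K : ℕ, ∀ x x' : E.PathSpace,
    (ψ (E.seg x 0 (1 + ℓ + c)) = ψ (E.seg x' 0 (1 + ℓ + c)) ∧
      ∀ i, ℓ + i ≤ k + K →
        F.lastEdge (ψ (E.seg x i (1 + ℓ + c))) = F.lastEdge (ψ (E.seg x' i (1 + ℓ + c)))) →
    E.seg x 0 (k + 1) = E.seg x' 0 (k + 1)

def higherBlock (G : DirGraph) (n : ℕ) : DirGraph where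
  V := G.FinPath n
  E := G.FinPath (n + 1)
  src := fun μ => ⟨fun i => μ.1 ⟨(i : ℕ), by have := i.isLt; omega⟩, by
    rintro ⟨a, ha⟩ ⟨b, hb⟩ hab
    exact μ.2 ⟨a, by omega⟩ ⟨b, by omega⟩ hab⟩
  rng := fun μ => ⟨fun i => μ.1 ⟨(i : ℕ) + 1, by have := i.isLt; omega⟩, by
    rintro ⟨a, ha⟩ ⟨b, hb⟩ hab
    exact μ.2 ⟨a + 1, by omega⟩ ⟨b + 1, by omega⟩ (by simp only at hab ⊢; omega)⟩

def toHigherBlock (G : DirGraph) (n : ℕ) (x : G.PathSpace) : (G.higherBlock n).PathSpace :=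
  ⟨fun i => G.seg x i (n + 1), by
    intro i
    apply Subtype.ext
    funext j
    show x.1 (i + ((j : ℕ) + 1)) = x.1 ((i + 1) + (j : ℕ))
    have h2 : i + ((j : ℕ) + 1) = (i + 1) + (j : ℕ) := by omega
    rw [h2]⟩

end DirGraph

/-- If an (ℓ,c)-block map satisfies the surjectivity condition, then the induced map
on the infinite path spaces is surjective. -/
theorem surjCondition_implies_surjective (E F : DirGraph)
    (hEfin : E.IsFinite) (hFfin : F.IsFinite) (hEns : E.NoSinks) (hFns : F.NoSinks)
    (ℓ c : ℕ) (ψ : E.FinPath (1 + ℓ + c) → F.FinPath (1 + ℓ))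
    (hψ : DirGraph.IsCompatible E F ℓ c ψ)
    (h : E.PathSpace → F.PathSpace) (hcont : Continuous h)
    (hind : DirGraph.InducedOnPaths E F ℓ c ψ h)
    (hsurj : DirGraph.SurjCondition E F ℓ c ψ) :
    Function.Surjective h := by
  classical
  obtain ⟨hEV, hEE⟩ := hEfin
  haveI : Finite E.E := hEE
  letI tE : TopologicalSpace E.E := ⊥
  haveI : DiscreteTopology E.E := ⟨rfl⟩
  letI tF : TopologicalSpace F.E := ⊥
  haveI : DiscreteTopology F.E := ⟨rfl⟩
  haveI : CompactSpace E.E := Finite.compactSpace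
  intro y
  choose xf hxf using fun k : ℕ =>
    hsurj (ℓ + k) (Nat.le_add_right ℓ k) (F.seg y 0 (1 + (ℓ + k)))
  have key : ∀ k m, m ≤ ℓ + k → (h (xf k)).1 m = y.1 m := by
    intro k m hm
    have hA := hind (xf k) (ℓ + k) (Nat.le_add_right ℓ k)
    have hB := hxf k
    have hmain : (F.seg (h (xf k)) 0 (1 + (ℓ + k))).1 ⟨m, by omega⟩ =
           (F.seg y 0 (1 + (ℓ + k))).1 ⟨m, by omega⟩ := by
      rcases le_or_gt m ℓ with hmℓ | hmℓ
      · have h1 := hA.1 ⟨m, by omega⟩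
        have h2 := hB.1 ⟨m, by omega⟩
        exact h1.trans h2.symm
      · have h1 := hA.2 (m - ℓ) (by omega)
        have h2 := hB.2 (m - ℓ) (by omega)
        have hfin : (⟨ℓ + (m - ℓ), by omega⟩ : Fin (1 + (ℓ + k))) = ⟨m, by omega⟩ :=
          Fin.ext (by simp; omega)
        rw [hfin] at h1 h2
        exact h1.trans h2.symm
    simpa [DirGraph.seg] using hmain
  -- compactness of E.PathSpace
  haveI : CompactSpace E.PathSpace := by
    constructor
    have hindu : Topology.IsInducing (Subtype.val : E.PathSpace → (ℕ → E.E)) := ⟨rfl⟩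
    apply hindu.isCompact_iff.2
    rw [show (Subtype.val '' (Set.univ : Set E.PathSpace)) = {x : ℕ → E.E | ∀ i, E.rng (x i) = E.src (x (i + 1))} from
      Set.ext fun x => ⟨fun ⟨z, _, hz⟩ => hz ▸ z.2, fun hx => ⟨⟨x, hx⟩, trivial, rfl⟩⟩]
    have hclosed : IsClosed {x : ℕ → E.E | ∀ i, E.rng (x i) = E.src (x (i + 1))} := by
      have heq : {x : ℕ → E.E | ∀ i, E.rng (x i) = E.src (x (i + 1))} =
          ⋂ i, (fun x : ℕ → E.E => (x i, x (i + 1))) ⁻¹'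
            {p : E.E × E.E | E.rng p.1 = E.src p.2} := by
        ext x; simp [Set.mem_iInter]
      rw [heq]
      exact isClosed_iInter fun i =>
        (isClosed_discrete _).preimage ((continuous_apply i).prodMk (continuous_apply (i + 1)))
    exact hclosed.isCompact
  -- cluster point
  have hne : (Filter.map xf Filter.atTop).NeBot := Filter.map_neBot
  obtain ⟨x, -, hx⟩ := isCompact_univ.exists_clusterPt (f := Filter.map xf Filter.atTop)
    (Filter.le_principal_iff.2 (Filter.univ_mem))
  have hmap : MapClusterPt (h x) Filter.atTop (h ∘ xf) :=
    MapClusterPt.continuousAt_comp (hcont.continuousAt) hx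
  refine ⟨x, ?_⟩
  apply Subtype.ext
  funext m
  have hev : Continuous (fun z : F.PathSpace => z.1 m) :=
    (continuous_apply m).comp continuous_induced_dom
  have hU : {z : F.PathSpace | z.1 m = (h x).1 m} ∈ nhds (h x) := by
    have : IsOpen {z : F.PathSpace | z.1 m = (h x).1 m} := by
      have : {z : F.PathSpace | z.1 m = (h x).1 m} =
          (fun z : F.PathSpace => z.1 m) ⁻¹' {(h x).1 m} := rfl
      rw [this]
      exact (isOpen_discrete _).preimage hev
    exact this.mem_nhds rfl
  have hfreq : ∃ᶠ k in Filter.atTop, (h (xf k)).1 m = (h x).1 m :=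
    mapClusterPt_iff_frequently.1 hmap _ hU
  have hev2 : ∀ᶠ k in Filter.atTop, (h (xf k)).1 m = y.1 m :=
    Filter.eventually_atTop.2 ⟨m, fun k hk => key k m (by omega)⟩
  obtain ⟨k, h1, h2⟩ := (hfreq.and_eventually hev2).exists
  exact (h1.symm.trans h2)
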